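/- arXiv:1912.12223 — 5 statements merged into one kernel-verified Lean document; each statement's English description precedes it below -/
import Mathlib

section
/- A bitopological space (S, τ₁, τ₂) is pairwise compact if and only if every τ₁-closed set is compact in (S, τ₂) and every τ₂-closed set is compact in (S, τ₁). -/
/-- A bitopological space `(S, t1, t2)` is pairwise compact if every cover of `S`
by sets each open in `t1` or in `t2` has a finite subcover. -/
def PairwiseCompact (S : Type*) (t1 t2 : TopologicalSpace S) : Prop :=
  ∀ 𝒰 : Set (Set S), (∀ U ∈ 𝒰, @IsOpen S t1 U ∨ @IsOpen S t2 U) → ⋃₀ 𝒰 = Set.univ →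
    ∃ ℱ ⊆ 𝒰, ℱ.Finite ∧ ⋃₀ ℱ = Set.univ

open Set TopologicalSpace Topology

theorem isCompact_iff_finite_subcover_sUnion {X : Type*} [t : TopologicalSpace X]
    {s : Set X} :
    IsCompact s ↔
      ∀ 𝒰 ⊆ {U : Set X | IsOpen U}, s ⊆ ⋃₀ 𝒰 → ∃ ℱ ⊆ 𝒰, ℱ.Finite ∧ s ⊆ ⋃₀ ℱ := by
  refine ⟨fun hs 𝒰 h𝒰 hs𝒰 => ?_,
    isCompact_generateFrom (generateFrom_setOfPred_isOpen t).symm⟩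
  rw [sUnion_eq_biUnion] at hs𝒰
  obtain ⟨ℱ, hℱ𝒰, hℱ, hsℱ⟩ := hs.elim_finite_subcover_image (c := id) h𝒰 hs𝒰
  exact ⟨ℱ, hℱ𝒰, hℱ, sUnion_eq_biUnion ▸ hsℱ⟩

namespace PairwiseCompact

variable {S : Type*} {t1 t2 : TopologicalSpace S}

theorem symm (h : PairwiseCompact S t1 t2) : PairwiseCompact S t2 t1 :=
  fun 𝒰 h𝒰 => h 𝒰 fun U hU => (h𝒰 U hU).symm

/-- Adjoining the `t1`-open set `Cᶜ` to a `t2`-open cover of `C` gives a pairwise open cover of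
the whole space. -/
theorem isCompact_of_isClosed (h : PairwiseCompact S t1 t2) {C : Set S}
    (hC : IsClosed[t1] C) : @IsCompact S t2 C := by
  refine isCompact_iff_finite_subcover_sUnion.2 fun 𝒰 h𝒰 hC𝒰 => ?_
  have hcover : ⋃₀ insert Cᶜ 𝒰 = univ := by
    rw [sUnion_insert, ← compl_subset_iff_union, compl_compl]
    exact hC𝒰
  obtain ⟨ℱ, hℱ𝒰, hℱ, hℱcover⟩ := h (insert Cᶜ 𝒰)
    (forall_mem_insert.2 ⟨Or.inl hC.isOpen_compl, fun U hU => Or.inr (h𝒰 hU)⟩) hcover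
  refine ⟨ℱ \ {Cᶜ}, sdiff_singleton_subset_iff.2 hℱ𝒰, hℱ.sdiff, fun x hx => ?_⟩
  obtain ⟨V, hVℱ, hxV⟩ := hℱcover.symm ▸ mem_univ x
  exact ⟨V, ⟨hVℱ, fun hV => (mem_singleton_iff.1 hV ▸ hxV) hx⟩, hxV⟩

/-- The `t1`-open members of a cover leave out a `t1`-closed, hence `t2`-compact, set; finitely many
`t2`-open members cover it, and they in turn leave out a `t1`-compact set covered by finitely many
`t1`-open members. -/
theorem of_isCompact_of_isClosed (h1 : ∀ C, IsClosed[t1] C → @IsCompact S t2 C)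
    (h2 : ∀ C, IsClosed[t2] C → @IsCompact S t1 C) : PairwiseCompact S t1 t2 := by
  intro 𝒰 h𝒰 hcover
  set 𝒰₁ := 𝒰 ∩ {U | IsOpen[t1] U}
  set 𝒰₂ := 𝒰 ∩ {U | IsOpen[t2] U}
  have hA : (⋃₀ 𝒰₁)ᶜ ⊆ ⋃₀ 𝒰₂ := by
    intro x hx
    obtain ⟨U, hU𝒰, hxU⟩ := hcover.symm ▸ mem_univ x
    rcases h𝒰 U hU𝒰 with hU | hU
    · exact absurd ⟨U, ⟨hU𝒰, hU⟩, hxU⟩ hx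
    · exact ⟨U, ⟨hU𝒰, hU⟩, hxU⟩
  have hA_closed : IsClosed[t1] (⋃₀ 𝒰₁)ᶜ :=
    @IsOpen.isClosed_compl S t1 _ (@isOpen_sUnion S t1 _ fun _ hU => hU.2)
  obtain ⟨ℱ₂, hℱ₂𝒰, hℱ₂, hAℱ₂⟩ := (isCompact_iff_finite_subcover_sUnion (t := t2)).1
    (h1 _ hA_closed) 𝒰₂ inter_subset_right hA
  have hB : (⋃₀ ℱ₂)ᶜ ⊆ ⋃₀ 𝒰₁ := compl_subset_comm.1 hAℱ₂
  have hB_closed : IsClosed[t2] (⋃₀ ℱ₂)ᶜ :=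
    @IsOpen.isClosed_compl S t2 _ (@isOpen_sUnion S t2 _ fun _ hU => (hℱ₂𝒰 hU).2)
  obtain ⟨ℱ₁, hℱ₁𝒰, hℱ₁, hBℱ₁⟩ := (isCompact_iff_finite_subcover_sUnion (t := t1)).1
    (h2 _ hB_closed) 𝒰₁ inter_subset_right hB
  refine ⟨ℱ₁ ∪ ℱ₂, union_subset (hℱ₁𝒰.trans inter_subset_left) (hℱ₂𝒰.trans inter_subset_left),
    hℱ₁.union hℱ₂, ?_⟩
  rw [sUnion_union, union_comm, ← compl_subset_iff_union]
  exact hBℱ₁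

end PairwiseCompact

theorem pairwiseCompact_iff_closed_compact (S : Type*) (t1 t2 : TopologicalSpace S) :
    PairwiseCompact S t1 t2 ↔
      (∀ C : Set S, @IsClosed S t1 C → @IsCompact S t2 C) ∧
      (∀ C : Set S, @IsClosed S t2 C → @IsCompact S t1 C) :=
  ⟨fun h => ⟨fun _ => h.isCompact_of_isClosed, fun _ => h.symm.isCompact_of_isClosed⟩,
    fun h => .of_isCompact_of_isClosed h.1 h.2⟩
end

section
/- Let (S, τ, R) be a Priestley space in which additionally R⁻¹(C) is clopen for every clopen C ⊆ S (an 'HSpa' object). Let L be a finite bounded distributive lattice with Heyting implication r₁ → r₂ = ⋁{ℓ ∈ L : r₁ ∧ ℓ ≤ r₂}. For continuous order-preserving f, g : S → L, define (f → g)(s) = ⋀{ f(s') → g(s') : s R s' }. Then f → g is continuous, i.e., (f → g)⁻¹({ℓ}) is clopen for each ℓ ∈ L. -/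
/-- `f` is continuous (for topology `t` on `S` and the discrete topology on `L`) and
order-preserving from the relation `R` to the lattice order on `L`. -/
def ContOP {S L : Type*} (t : TopologicalSpace S) [Lattice L] (R : S → S → Prop)
    (f : S → L) : Prop :=
  @Continuous S L t ⊥ f ∧ ∀ x y, R x y → f x ≤ f y

/-- Heyting implication on a finite bounded lattice:
`a → b = ⋁ { ℓ : a ⊓ ℓ ≤ b }`. -/
noncomputable def latImp {L : Type*} [Lattice L] [BoundedOrder L] [Fintype L]
    (a b : L) : L :=
  letI : DecidablePred (fun ℓ : L => a ⊓ ℓ ≤ b) := Classical.decPred _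
  (Finset.univ.filter fun ℓ : L => a ⊓ ℓ ≤ b).sup id

/-- The pointwise intuitionistic implication
`(f → g)(s) = ⋀ { f s' → g s' : R s s' }` (a finite meet, as `L` is finite). -/
noncomputable def ptImp {S L : Type*} [Lattice L] [BoundedOrder L] [Fintype L]
    (R : S → S → Prop) (f g : S → L) (s : S) : L :=
  letI : DecidablePred (fun ℓ : L => ∃ s', R s s' ∧ latImp (f s') (g s') = ℓ) :=
    Classical.decPred _
  (Finset.univ.filter fun ℓ : L => ∃ s', R s s' ∧ latImp (f s') (g s') = ℓ).inf id

/-!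
Write `h s = f s → g s`. The value of `ptImp R f g` at `s` is determined by the finite set
of values that `h` takes on the `R`-successors of `s`, and `v` is among them exactly for `s` in
`R⁻¹(h⁻¹{v})`, which is clopen by hypothesis. So `ptImp R f g` factors through finitely many
clopen indicators and is therefore continuous into discrete `L`.
-/

open Set

section

variable {S α : Type*} [TopologicalSpace S]

theorem isClopen_setOf_exists_rel_eq {R : S → S → Prop}
    (hR : ∀ C : Set S, IsClopen C → IsClopen {y | ∃ x ∈ C, R y x})
    [TopologicalSpace α] [DiscreteTopology α] {h : S → α} (hh : Continuous h) (a : α) :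
    IsClopen {s | ∃ s', R s s' ∧ h s' = a} := by
  simpa only [mem_preimage, mem_singleton_iff, and_comm] using
    hR _ ((isClopen_discrete {a}).preimage hh)

theorem continuous_comp_setOf_mem [Finite α] {β : Type*} [TopologicalSpace β]
    {A : α → Set S} (hA : ∀ a, IsClopen (A a)) (Φ : Set α → β) :
    Continuous fun s => Φ {a | s ∈ A a} := by
  have hind : Continuous fun s a => (A a).boolIndicator s :=
    continuous_pi fun a => (continuous_boolIndicator_iff_isClopen _).mpr (hA a)
  have hΦ : Continuous fun p : α → Bool => Φ {a | p a = true} :=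
    continuous_of_discreteTopology
  refine (hΦ.comp hind).congr fun s => ?_
  simp only [Function.comp_apply, ← mem_iff_boolIndicator]

end

theorem ptImp_fibers_clopen_general
    (S : Type*) (t : TopologicalSpace S) (R : S → S → Prop)
    (hR : ∀ C : Set S, @IsClopen S t C →
      @IsClopen S t {y : S | ∃ x ∈ C, R y x})
    (L : Type*) [DistribLattice L] [BoundedOrder L] [Fintype L]
    (f g : S → L) (hf : ContOP t R f) (hg : ContOP t R g) :
    ∀ ℓ : L, @IsClopen S t ((ptImp R f g) ⁻¹' {ℓ}) := by
  classical
  let := t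
  let : TopologicalSpace L := ⊥
  have : DiscreteTopology L := ⟨rfl⟩
  have himp : Continuous fun s => latImp (f s) (g s) :=
    (continuous_of_discreteTopology (f := fun p : L × L => latImp p.1 p.2)).comp
      (hf.1.prodMk hg.1)
  -- `ptImp R f g s` unfolds definitionally to the meet over `{ℓ | s ∈ R⁻¹(h⁻¹{ℓ})}`
  have hcont : Continuous (ptImp R f g) :=
    continuous_comp_setOf_mem (isClopen_setOf_exists_rel_eq hR himp) fun T =>
      (Finset.univ.filter (· ∈ T)).inf id
  exact fun ℓ => (isClopen_discrete {ℓ}).preimage hcont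

/-- In a Priestley space in which `R⁻¹` of every clopen set is clopen, the pointwise
implication of continuous order-preserving maps into a finite bounded distributive
lattice has clopen fibers, i.e. it is continuous for the discrete topology on `L`. -/
theorem ptImp_fibers_clopen
    (S : Type*) (t : TopologicalSpace S) (R : S → S → Prop) [IsPartialOrder S R]
    (hcomp : @CompactSpace S t)
    (hsep : ∀ x y : S, ¬ R x y → ∃ W : Set S, @IsClopen S t W ∧
      (∀ a b, R a b → a ∈ W → b ∈ W) ∧ x ∈ W ∧ y ∉ W)
    (hR : ∀ C : Set S, @IsClopen S t C →
      @IsClopen S t {y : S | ∃ x ∈ C, R y x})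
    (L : Type*) [DistribLattice L] [BoundedOrder L] [Fintype L]
    (f g : S → L) (hf : ContOP t R f) (hg : ContOP t R g) :
    ∀ ℓ : L, @IsClopen S t ((ptImp R f g) ⁻¹' {ℓ}) :=
  ptImp_fibers_clopen_general S t R hR L f g hf hg
end

section
/- Let A be a distributive lattice and x, y ∈ A with x ≠ y. Then there exists a prime ideal P of A containing exactly one of x, y. -/
open Order

theorem Order.Ideal.exists_isPrime_mem_notMem_of_not_le {A : Type*} [DistribLattice A]
    {x y : A} (hyx : ¬ y ≤ x) : ∃ P : Ideal A, P.IsPrime ∧ x ∈ P ∧ y ∉ P := by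
  have hdisj : Disjoint ((PFilter.principal y : PFilter A) : Set A) (Ideal.principal x) :=
    Set.disjoint_left.2 fun _ hyz hzx => hyx (le_trans hyz hzx)
  obtain ⟨P, hP, hxP, hyP⟩ := DistribLattice.prime_ideal_of_disjoint_filter_ideal hdisj
  exact ⟨P, hP, hxP Ideal.mem_principal_self, Set.disjoint_left.1 hyP le_rfl⟩

/-- Stone's prime ideal separation theorem: in a distributive lattice, any two
distinct elements are separated by a prime ideal containing exactly one of them. -/
theorem prime_ideal_separation (A : Type*) [DistribLattice A]
    (x y : A) (hxy : x ≠ y) :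
    ∃ P : Order.Ideal A, Order.Ideal.IsPrime P ∧
      ((x ∈ P ∧ y ∉ P) ∨ (y ∈ P ∧ x ∉ P)) := by
  by_cases hyx : y ≤ x
  · obtain ⟨P, hP, hyP, hxP⟩ :=
      Ideal.exists_isPrime_mem_notMem_of_not_le fun hxy' => hxy (le_antisymm hxy' hyx)
    exact ⟨P, hP, Or.inr ⟨hyP, hxP⟩⟩
  · obtain ⟨P, hP, hxP, hyP⟩ := Ideal.exists_isPrime_mem_notMem_of_not_le hyx
    exact ⟨P, hP, Or.inl ⟨hxP, hyP⟩⟩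
end

section
/- Let (S, τ, R) be a Priestley space and L a finite bounded distributive lattice (discrete, with lattice order). The evaluation map δ : S → Hom(Hom_{PSpa}(S, L), L), δ(s)(f) = f(s), is injective. -/
/-!
A clopen up-set `W` separating `x` from `y` has a continuous order-preserving characteristic
map `S → L` sending `W` to `⊤` and its complement to `⊥`, which then sends `x` to `⊤` and `y`
to `⊥`. Hence the order of a Priestley space is reflected by such maps, and points on which
all of them agree are equal by antisymmetry.
-/

theorem contOP_ite_mem {S L : Type*} [TopologicalSpace S] [Lattice L] [BoundedOrder L]
    {R : S → S → Prop} {W : Set S} [DecidablePred (· ∈ W)] (hW : IsClopen W)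
    (hup : ∀ a b, R a b → a ∈ W → b ∈ W) :
    ContOP ‹_› R fun z => if z ∈ W then (⊤ : L) else ⊥ := by
  let : TopologicalSpace L := ⊥
  refine ⟨Continuous.if (fun a ha => by simp [hW.frontier_eq] at ha)
    continuous_const continuous_const, fun a b hab => ?_⟩
  by_cases ha : a ∈ W
  · simp [ha, hup a b hab ha]
  · simp [ha]

theorem rel_of_forall_contOP_le {S : Type*} (t : TopologicalSpace S) {R : S → S → Prop}
    (hsep : ∀ x y : S, ¬ R x y → ∃ W : Set S, @IsClopen S t W ∧
      (∀ a b, R a b → a ∈ W → b ∈ W) ∧ x ∈ W ∧ y ∉ W)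
    (L : Type*) [Lattice L] [BoundedOrder L] [Nontrivial L] {x y : S}
    (h : ∀ f : S → L, ContOP t R f → f x ≤ f y) : R x y := by
  classical
  by_contra hxy
  obtain ⟨W, hW, hup, hxW, hyW⟩ := hsep x y hxy
  have := h _ (@contOP_ite_mem S L t _ _ R W _ hW hup)
  simp [hxW, hyW] at this

theorem evaluation_injective_general
    (S : Type*) (t : TopologicalSpace S) (R : S → S → Prop) [IsPartialOrder S R]
    (hsep : ∀ x y : S, ¬ R x y → ∃ W : Set S, @IsClopen S t W ∧
      (∀ a b, R a b → a ∈ W → b ∈ W) ∧ x ∈ W ∧ y ∉ W)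
    (L : Type*) [DistribLattice L] [BoundedOrder L] [Nontrivial L]
    (s u : S) (h : ∀ f : S → L, ContOP t R f → f s = f u) : s = u :=
  antisymm (r := R) (rel_of_forall_contOP_le t hsep L fun f hf => (h f hf).le)
    (rel_of_forall_contOP_le t hsep L fun f hf => (h f hf).ge)

/-- In a Priestley space, the evaluation map `δ(s)(f) = f s` into homomorphisms on the
lattice of continuous order-preserving maps into a finite bounded distributive
nontrivial lattice `L` is injective: if every continuous order-preserving `f` takes
the same value at `s` and `u`, then `s = u`. -/
theorem evaluation_injective
    (S : Type*) (t : TopologicalSpace S) (R : S → S → Prop) [IsPartialOrder S R]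
    (hcomp : @CompactSpace S t)
    (hsep : ∀ x y : S, ¬ R x y → ∃ W : Set S, @IsClopen S t W ∧
      (∀ a b, R a b → a ∈ W → b ∈ W) ∧ x ∈ W ∧ y ∉ W)
    (L : Type*) [DistribLattice L] [BoundedOrder L] [Fintype L] [Nontrivial L]
    (s u : S) (h : ∀ f : S → L, ContOP t R f → f s = f u) : s = u :=
  evaluation_injective_general S t R hsep L s u h
end

section
/- Let (S, τ, R) be a Priestley space, L a finite bounded distributive lattice, and δ(s)(f) = f(s) the evaluation map from S to homomorphisms Hom_{PSpa}(S,L) → L. Then for s₁, s₂ ∈ S: s₁ R s₂ if and only if f(s₁) ≤ f(s₂) for every continuous order-preserving f : S → L. -/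
theorem IsClopen.continuous_ite_mem {X Y : Type*} [TopologicalSpace X] [tY : TopologicalSpace Y]
    {W : Set X} [DecidablePred (· ∈ W)] (hW : IsClopen W) (a b : Y) :
    Continuous fun x => if x ∈ W then a else b :=
  continuous_const.if (by simp [hW.frontier_eq]) continuous_const

theorem contOP_ite_mem_top_bot {S L : Type*} (t : TopologicalSpace S) [Lattice L]
    [BoundedOrder L] {R : S → S → Prop} {W : Set S} [DecidablePred (· ∈ W)]
    (hW : IsClopen W) (hup : ∀ a b, R a b → a ∈ W → b ∈ W) :
    ContOP t R fun s => if s ∈ W then (⊤ : L) else ⊥ := by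
  refine ⟨hW.continuous_ite_mem (tY := ⊥) _ _, fun x y hxy => ?_⟩
  by_cases hx : x ∈ W
  · simp [hx, hup x y hxy hx]
  · simp [hx]

theorem rel_iff_all_maps_le_general
    (S : Type*) (t : TopologicalSpace S) (R : S → S → Prop)
    (hsep : ∀ x y : S, ¬ R x y → ∃ W : Set S, @IsClopen S t W ∧
      (∀ a b, R a b → a ∈ W → b ∈ W) ∧ x ∈ W ∧ y ∉ W)
    (L : Type*) [DistribLattice L] [BoundedOrder L] [Nontrivial L]
    (s₁ s₂ : S) :
    R s₁ s₂ ↔ ∀ f : S → L, ContOP t R f → f s₁ ≤ f s₂ := by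
  refine ⟨fun h f hf => hf.2 s₁ s₂ h, fun h => ?_⟩
  by_contra hR
  obtain ⟨W, hW, hup, hs₁, hs₂⟩ := hsep s₁ s₂ hR
  classical
  simpa [hs₁, hs₂] using h _ (contOP_ite_mem_top_bot t hW hup)

/-- In a Priestley space, `s₁ R s₂` holds iff `f s₁ ≤ f s₂` for every continuous
order-preserving map `f` into a finite bounded distributive nontrivial lattice. -/
theorem rel_iff_all_maps_le
    (S : Type*) (t : TopologicalSpace S) (R : S → S → Prop) [IsPartialOrder S R]
    (hcomp : @CompactSpace S t)
    (hsep : ∀ x y : S, ¬ R x y → ∃ W : Set S, @IsClopen S t W ∧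
      (∀ a b, R a b → a ∈ W → b ∈ W) ∧ x ∈ W ∧ y ∉ W)
    (L : Type*) [DistribLattice L] [BoundedOrder L] [Fintype L] [Nontrivial L]
    (s₁ s₂ : S) :
    R s₁ s₂ ↔ ∀ f : S → L, ContOP t R f → f s₁ ≤ f s₂ :=
  rel_iff_all_maps_le_general S t R hsep L s₁ s₂
end
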